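/- Let n ≥ 3 and let Φ₁, Φ₂ : 𝒦^n → 𝒦^n be SL(n) equivariant continuous Minkowski valuations which are homogeneous of degree 1. If there exists x ∈ ℝ^n with x ≠ 0 such that Φ₁{x} = Φ₂{x} and Φ₁[0,x] = Φ₂[0,x], then Φ₁ = Φ₂. Here [0,x] denotes the segment from the origin to x, i.e., the convex hull of {0, x}. -/

import Mathlib

open scoped RealInnerProductSpace Pointwise NNReal
open MeasureTheory

noncomputable section

/-- `ℝⁿ` with its Euclidean structure. -/
abbrev Euc (n : ℕ) := EuclideanSpace ℝ (Fin n)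

variable {n : ℕ}

/-- The image of a convex body under a linear map (automatically continuous,
since we are in finite dimensions). -/
def mapBody (φ : Euc n →ₗ[ℝ] Euc n) (K : ConvexBody (Euc n)) : ConvexBody (Euc n) :=
  ⟨φ '' (K : Set (Euc n)), K.convex.linear_image φ,
    K.isCompact.image φ.continuous_of_finiteDimensional, K.nonempty.image φ⟩

/-- The support function `h(K, x) = max {⟪x, y⟫ : y ∈ K}` of a convex body. -/
def supp (K : ConvexBody (Euc n)) (x : Euc n) : ℝ :=
  sSup ((fun y => ⟪x, y⟫) '' (K : Set (Euc n)))

lemma isCompact_convexHull_insert_zero (K : ConvexBody (Euc n)) :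
    IsCompact (convexHull ℝ (insert (0 : Euc n) (K : Set (Euc n)))) := by
  have h : convexHull ℝ (insert (0 : Euc n) (K : Set (Euc n)))
      = (fun p : ℝ × Euc n => p.1 • p.2) '' (Set.Icc (0 : ℝ) 1 ×ˢ (K : Set (Euc n))) := by
    rw [convexHull_insert K.nonempty, K.convex.convexHull_eq]
    ext y
    constructor
    · intro hy
      rw [mem_convexJoin] at hy
      obtain ⟨a, ha, b, hb, hy⟩ := hy
      rw [Set.mem_singleton_iff] at ha
      subst ha
      rw [segment_eq_image ℝ (0 : Euc n) b] at hy
      obtain ⟨θ, hθ, rfl⟩ := hy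
      exact ⟨(θ, b), Set.mem_prod.mpr ⟨hθ, hb⟩, by simp⟩
    · rintro ⟨⟨θ, z⟩, hmem, rfl⟩
      obtain ⟨hθ, hz⟩ := Set.mem_prod.mp hmem
      rw [mem_convexJoin]
      refine ⟨0, rfl, z, hz, ?_⟩
      rw [segment_eq_image ℝ (0 : Euc n) z]
      exact ⟨θ, hθ, by simp⟩
  rw [h]
  exact (isCompact_Icc.prod K.isCompact).image (continuous_fst.smul continuous_snd)

/-- `K_o`, the convex hull of `K` and the origin. -/
def bodyO (K : ConvexBody (Euc n)) : ConvexBody (Euc n) :=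
  ⟨convexHull ℝ (insert (0 : Euc n) (K : Set (Euc n))), convex_convexHull ℝ _,
    isCompact_convexHull_insert_zero K,
    ⟨0, subset_convexHull ℝ _ (Set.mem_insert 0 _)⟩⟩

/-- The moment vector `m(K) = ∫_K x dx`. -/
def momentVec (K : ConvexBody (Euc n)) : Euc n := ∫ y in (K : Set (Euc n)), y

/-- The support function of the moment body, `h(M K, x) = ∫_K |⟪x, y⟫| dy`. -/
def momentSupp (K : ConvexBody (Euc n)) (x : Euc n) : ℝ :=
  ∫ y in (K : Set (Euc n)), |⟪x, y⟫|

/-- `m_*(K) = ∫_{K_o ∖ K} x dx`. -/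
def momentVecStar (K : ConvexBody (Euc n)) : Euc n :=
  ∫ y in ((bodyO K : Set (Euc n)) \ (K : Set (Euc n))), y

/-- The support function of `M_* K`, `h(M_* K, x) = ∫_{K_o ∖ K} |⟪x, y⟫| dy`. -/
def momentSuppStar (K : ConvexBody (Euc n)) (x : Euc n) : ℝ :=
  ∫ y in ((bodyO K : Set (Euc n)) \ (K : Set (Euc n))), |⟪x, y⟫|

/-- `Φ` is a Minkowski valuation: `Φ K + Φ L = Φ (K ∪ L) + Φ (K ∩ L)` whenever
`K ∪ L` (and hence `K ∩ L`) is a convex body. -/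
def IsMinkowskiValuation (Φ : ConvexBody (Euc n) → ConvexBody (Euc n)) : Prop :=
  ∀ K L M N : ConvexBody (Euc n),
    (M : Set (Euc n)) = (K : Set (Euc n)) ∪ (L : Set (Euc n)) →
    (N : Set (Euc n)) = (K : Set (Euc n)) ∩ (L : Set (Euc n)) →
    Φ K + Φ L = Φ M + Φ N

/-- `Φ` is `GL(n)` equivariant: `Φ(φ K) = |det φ|^q • φ (Φ K)` for some fixed `q ∈ ℝ`. -/
def IsGLEquivariant (Φ : ConvexBody (Euc n) → ConvexBody (Euc n)) : Prop :=
  ∃ q : ℝ, ∀ (φ : Euc n ≃ₗ[ℝ] Euc n) (K : ConvexBody (Euc n)),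
    Φ (mapBody (φ : Euc n →ₗ[ℝ] Euc n) K)
      = |LinearMap.det (φ : Euc n →ₗ[ℝ] Euc n)| ^ (q : ℝ)
          • mapBody (φ : Euc n →ₗ[ℝ] Euc n) (Φ K)

/-- `Φ` is `SL(n)` equivariant: `Φ(φ K) = φ (Φ K)` for all `φ` with `det φ = 1`. -/
def IsSLEquivariant (Φ : ConvexBody (Euc n) → ConvexBody (Euc n)) : Prop :=
  ∀ φ : Euc n ≃ₗ[ℝ] Euc n, LinearMap.det (φ : Euc n →ₗ[ℝ] Euc n) = 1 →
    ∀ K : ConvexBody (Euc n),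
      Φ (mapBody (φ : Euc n →ₗ[ℝ] Euc n) K) = mapBody (φ : Euc n →ₗ[ℝ] Euc n) (Φ K)

/-- `Φ` is (positively) homogeneous of degree `r`. -/
def IsHomogeneousOfDegree (Φ : ConvexBody (Euc n) → ConvexBody (Euc n)) (r : ℝ) : Prop :=
  ∀ c : ℝ, 0 < c → ∀ K : ConvexBody (Euc n), Φ (c • K) = (c ^ r) • Φ K


/-- The convex body `{x}`. -/
def ptBody (x : Euc n) : ConvexBody (Euc n) :=
  ⟨{x}, convex_singleton x, isCompact_singleton, Set.singleton_nonempty x⟩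

/-- The segment `[0, x]` as a convex body. -/
def segBody (x : Euc n) : ConvexBody (Euc n) :=
  ⟨convexHull ℝ {0, x}, convex_convexHull ℝ _,
    ((Set.finite_singleton x).insert 0).isCompact_convexHull ℝ,
    ⟨x, subset_convexHull ℝ _ (by simp)⟩⟩

/-!
The two valuations agree on every segment of the line `ℝ x`: homogeneity and an `SL(n)` map
sending `x` to `-x` spread the data from `{x}` and `[0, x]` to all points `{t x}` and all
segments `[0, t x]`, and the valuation property, together with cancellation in the Minkowski
semigroup of convex bodies, gives the remaining segments.

Homogeneity upgrades `SL(n)` equivariance to equivariance under maps of positive determinant, and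
continuity carries it to the limit `t → 0⁺` of `P + t • id`, where `P v = ⟪u, v⟫ • z` with
`⟪u, z⟫ ≥ 0`. If a point `y ∈ Φ₁ K` were strictly separated from `Φ₂ K` by `u`, then for
`z = ± x` the map `P` sends `K` to a segment of `ℝ x`, so
`P (Φ₁ K) = Φ₁ (P K) = Φ₂ (P K) = P (Φ₂ K)`, which contains `P y`: a contradiction.
-/

open Filter Topology

section Cancellation

variable {E : Type*} [TopologicalSpace E] [AddCommGroup E] [Module ℝ E]
  [IsTopologicalAddGroup E] [ContinuousSMul ℝ E] [LocallyConvexSpace ℝ E]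

theorem Set.subset_of_add_subset_add {A B C : Set E} (hB : Convex ℝ B) (hB' : IsClosed B)
    (hC : IsCompact C) (hC' : C.Nonempty) (h : A + C ⊆ B + C) : A ⊆ B := by
  intro a ha
  by_contra haB
  obtain ⟨f, s, hfa, hfB⟩ := geometric_hahn_banach_point_closed hB hB' haB
  obtain ⟨c, hc, hmin⟩ := hC.exists_isMinOn hC' f.continuous.continuousOn
  obtain ⟨b, hb, c', hc', hbc⟩ := h (Set.add_mem_add ha hc)
  have hsum : f b + f c' = f a + f c := by rw [← map_add, ← map_add]; exact congrArg f hbc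
  linarith [hfB b hb, isMinOn_iff.mp hmin c' hc']

instance [T2Space E] : IsCancelAdd (ConvexBody E) :=
  haveI : IsRightCancelAdd (ConvexBody E) := ⟨fun C A B h => by
    have h' : (A : Set E) + C = B + C := by
      rw [← ConvexBody.coe_add, ← ConvexBody.coe_add]; exact congrArg _ h
    exact ConvexBody.ext <| subset_antisymm
      (Set.subset_of_add_subset_add B.convex B.isClosed C.isCompact C.nonempty h'.le)
      (Set.subset_of_add_subset_add A.convex A.isClosed C.isCompact C.nonempty h'.ge)⟩
  AddCommMagma.IsRightCancelAdd.toIsCancelAdd _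

end Cancellation

lemma coe_mapBody (φ : Euc n →ₗ[ℝ] Euc n) (K : ConvexBody (Euc n)) :
    (mapBody φ K : Set (Euc n)) = φ '' K :=
  rfl

lemma mapBody_smul (c : ℝ) (φ : Euc n →ₗ[ℝ] Euc n) (K : ConvexBody (Euc n)) :
    mapBody (c • φ) K = c • mapBody φ K :=
  ConvexBody.ext <| by
    rw [ConvexBody.coe_smul, coe_mapBody, coe_mapBody, ← Set.image_smul, Set.image_image]
    rfl

lemma dist_mapBody_le (φ ψ : Euc n →ₗ[ℝ] Euc n) (K : ConvexBody (Euc n)) {r : ℝ} (hr : 0 ≤ r)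
    (h : ∀ v ∈ K, ‖φ v - ψ v‖ ≤ r) : dist (mapBody φ K) (mapBody ψ K) ≤ r := by
  rw [← ConvexBody.hausdorffDist_coe]
  refine Metric.hausdorffDist_le_of_mem_dist hr ?_ ?_
  · rintro _ ⟨v, hv, rfl⟩
    exact ⟨ψ v, ⟨v, hv, rfl⟩, by rw [dist_eq_norm]; exact h v hv⟩
  · rintro _ ⟨v, hv, rfl⟩
    exact ⟨φ v, ⟨v, hv, rfl⟩, by rw [dist_eq_norm, norm_sub_rev]; exact h v hv⟩

lemma tendsto_mapBody_add_smul_id (φ : Euc n →ₗ[ℝ] Euc n) (K : ConvexBody (Euc n)) :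
    Tendsto (fun t : ℝ => mapBody (φ + t • LinearMap.id) K) (𝓝 0) (𝓝 (mapBody φ K)) := by
  obtain ⟨R, hR, hKR⟩ := K.isBounded.exists_pos_norm_le
  rw [tendsto_iff_dist_tendsto_zero]
  refine squeeze_zero (fun _ => dist_nonneg)
    (fun t => dist_mapBody_le _ _ K (by positivity) fun v hv => ?_) (g := fun t => |t| * R) ?_
  · simp only [LinearMap.add_apply, LinearMap.smul_apply, LinearMap.id_apply,
      add_sub_cancel_left, norm_smul, Real.norm_eq_abs]
    exact mul_le_mul_of_nonneg_left (hKR v hv) (abs_nonneg t)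
  · simpa using (continuous_abs.tendsto (0 : ℝ)).mul_const R

lemma det_rankOne_add_smul_id_pos {u z : Euc n} (huz : 0 ≤ ⟪u, z⟫) {t : ℝ} (ht : 0 < t) :
    0 < LinearMap.det ((innerₗ (Euc n) u).smulRight z + t • LinearMap.id) := by
  have htrans : (innerₗ (Euc n) u).smulRight z + t • LinearMap.id
      = t • LinearMap.transvection (innerₗ (Euc n) u) (t⁻¹ • z) := by
    refine LinearMap.ext fun v => ?_
    simp only [LinearMap.add_apply, LinearMap.smul_apply, LinearMap.smulRight_apply,
      innerₗ_apply_apply, LinearMap.id_apply, LinearMap.transvection.apply, smul_add, smul_smul]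
    rw [mul_left_comm, mul_inv_cancel₀ ht.ne', mul_one, add_comm]
  rw [htrans, LinearMap.det_smul, LinearMap.transvection.det]
  simp only [innerₗ_apply_apply, inner_smul_right]
  positivity

/-- The segment `[a x, b x]`; `a` and `b` may come in either order. -/
def lineSeg (x : Euc n) (a b : ℝ) : ConvexBody (Euc n) :=
  ⟨LinearMap.toSpanSingleton ℝ (Euc n) x '' Set.uIcc a b, (convex_uIcc a b).linear_image _,
    isCompact_uIcc.image (LinearMap.toSpanSingleton ℝ (Euc n) x).continuous_of_finiteDimensional,
    Set.nonempty_uIcc.image _⟩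

section lineSeg

variable (x : Euc n) (a b : ℝ)

lemma coe_lineSeg : (lineSeg x a b : Set (Euc n)) = (· • x) '' Set.uIcc a b :=
  rfl

lemma lineSeg_comm : lineSeg x a b = lineSeg x b a :=
  ConvexBody.ext <| by rw [coe_lineSeg, coe_lineSeg, Set.uIcc_comm]

lemma smul_lineSeg (c : ℝ) : c • lineSeg x a b = lineSeg x (c * a) (c * b) :=
  ConvexBody.ext <| by
    rw [ConvexBody.coe_smul, coe_lineSeg, coe_lineSeg, ← Set.image_const_mul_uIcc,
      ← Set.image_smul, Set.image_image, Set.image_image]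
    simp only [smul_smul]

lemma mapBody_lineSeg (φ : Euc n →ₗ[ℝ] Euc n) : mapBody φ (lineSeg x a b) = lineSeg (φ x) a b :=
  ConvexBody.ext <| by
    rw [coe_mapBody, coe_lineSeg, coe_lineSeg, Set.image_image]
    simp only [map_smul]

lemma lineSeg_neg : lineSeg (-x) a b = lineSeg x (-a) (-b) :=
  ConvexBody.ext <| by
    rw [coe_lineSeg, coe_lineSeg, ← Set.image_neg_uIcc, Set.image_image]
    simp only [smul_neg, neg_smul]

lemma lineSeg_self : lineSeg x a a = ptBody (a • x) :=
  ConvexBody.ext <| by rw [coe_lineSeg, Set.uIcc_self, Set.image_singleton]; rfl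

lemma lineSeg_zero_zero : lineSeg x 0 0 = 0 :=
  ConvexBody.ext <| by rw [coe_lineSeg, Set.uIcc_self, Set.image_singleton, zero_smul]; rfl

lemma lineSeg_zero_one : lineSeg x 0 1 = segBody x :=
  ConvexBody.ext <| by
    rw [coe_lineSeg, Set.uIcc_of_le zero_le_one]
    show _ = convexHull ℝ {0, x}
    rw [convexHull_pair, segment_eq_image']
    simp

variable {x a b} {c : ℝ}

lemma coe_lineSeg_eq_union (hab : a ≤ b) (hbc : b ≤ c) :
    (lineSeg x a c : Set (Euc n)) = (lineSeg x a b : Set (Euc n)) ∪ lineSeg x b c := by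
  rw [coe_lineSeg, coe_lineSeg, coe_lineSeg, Set.uIcc_of_le hab, Set.uIcc_of_le hbc,
    Set.uIcc_of_le (hab.trans hbc), ← Set.image_union, Set.Icc_union_Icc_eq_Icc hab hbc]

lemma coe_lineSeg_eq_inter (hx : x ≠ 0) (hab : a ≤ b) (hbc : b ≤ c) :
    (lineSeg x b b : Set (Euc n)) = (lineSeg x a b : Set (Euc n)) ∩ lineSeg x b c := by
  rw [coe_lineSeg, coe_lineSeg, coe_lineSeg, Set.uIcc_of_le hab, Set.uIcc_of_le hbc,
    ← Set.image_inter (smul_left_injective ℝ hx), Set.Icc_inter_Icc_eq_singleton hab hbc,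
    Set.uIcc_self]

end lineSeg

lemma det_reflection_orthogonal_span_singleton {E : Type*} [NormedAddCommGroup E]
    [InnerProductSpace ℝ E] [FiniteDimensional ℝ E] {v : E} (hv : v ≠ 0) :
    LinearMap.det (ℝ ∙ v)ᗮ.reflection.toLinearMap = -1 := by
  rw [Submodule.det_reflection, Submodule.orthogonal_orthogonal, finrank_span_singleton hv,
    pow_one]

/-- The witness is the rotation by `π` in a plane through `x`. -/
lemma exists_det_eq_one_apply_eq_neg {E : Type*} [NormedAddCommGroup E] [InnerProductSpace ℝ E]
    [FiniteDimensional ℝ E] (hE : 2 ≤ Module.finrank ℝ E) {x : E} (hx : x ≠ 0) :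
    ∃ ν : E ≃ₗ[ℝ] E, LinearMap.det (ν : E →ₗ[ℝ] E) = 1 ∧ ν x = -x := by
  obtain ⟨w, hw, hw0⟩ : ∃ w ∈ (ℝ ∙ x)ᗮ, w ≠ 0 := by
    refine Submodule.exists_mem_ne_zero_of_ne_bot fun h => ?_
    have h1 := finrank_span_singleton (K := ℝ) hx
    rw [Submodule.orthogonal_eq_bot_iff.mp h, finrank_top] at h1
    omega
  have hxw : x ∈ (ℝ ∙ w)ᗮ := Submodule.mem_orthogonal_singleton_iff_inner_left.mpr
    (Submodule.mem_orthogonal_singleton_iff_inner_right.mp hw)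
  refine ⟨((ℝ ∙ w)ᗮ.reflection.trans (ℝ ∙ x)ᗮ.reflection).toLinearEquiv, ?_, ?_⟩
  · change LinearMap.det ((ℝ ∙ x)ᗮ.reflection.toLinearMap ∘ₗ (ℝ ∙ w)ᗮ.reflection.toLinearMap) = 1
    rw [LinearMap.det_comp, det_reflection_orthogonal_span_singleton hx,
      det_reflection_orthogonal_span_singleton hw0]
    norm_num
  · change (ℝ ∙ x)ᗮ.reflection ((ℝ ∙ w)ᗮ.reflection x) = -x
    rw [Submodule.reflection_mem_subspace_eq_self hxw,
      Submodule.reflection_orthogonalComplement_singleton_eq_neg]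

lemma exists_mapBody_rankOne_eq_lineSeg (u x : Euc n) (c : ℝ) (K : ConvexBody (Euc n)) :
    ∃ a b, mapBody ((innerₗ (Euc n) u).smulRight (c • x)) K = lineSeg x a b := by
  set g : Euc n →ₗ[ℝ] ℝ := c • innerₗ (Euc n) u
  have hcompact : IsCompact (g '' K) := K.isCompact.image g.continuous_of_finiteDimensional
  have hconn : IsConnected (g '' K) :=
    ⟨K.nonempty.image g, (K.convex.linear_image g).isPreconnected⟩
  refine ⟨sInf (g '' K), sSup (g '' K), ConvexBody.ext ?_⟩
  rw [coe_mapBody, coe_lineSeg, Set.uIcc_of_le (csInf_le_csSup hconn.nonempty hcompact.bddBelow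
    hcompact.bddAbove), ← eq_Icc_of_connected_compact hconn hcompact,
    Set.image_image]
  refine Set.image_congr fun v _ => ?_
  simp only [g, LinearMap.smulRight_apply, LinearMap.smul_apply, innerₗ_apply_apply, smul_smul,
    smul_eq_mul, mul_comm]

section Valuation

variable {Φ Φ₁ Φ₂ : ConvexBody (Euc n) → ConvexBody (Euc n)}

lemma IsHomogeneousOfDegree.map_zero (hhom : IsHomogeneousOfDegree Φ 1) : Φ 0 = 0 := by
  have h20 : (2 : ℝ) • (0 : ConvexBody (Euc n)) = 0 :=
    ConvexBody.ext <| by rw [ConvexBody.coe_smul, ConvexBody.coe_zero, smul_zero]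
  have h : Φ 0 + Φ 0 = 0 + Φ 0 :=
    calc Φ 0 + Φ 0 = (2 : ℝ) • Φ 0 :=
          ConvexBody.ext <| by
            rw [ConvexBody.coe_smul, ConvexBody.coe_add, show (2 : ℝ) = 1 + 1 by norm_num,
              (Φ 0).convex.add_smul zero_le_one zero_le_one, one_smul]
      _ = Φ ((2 : ℝ) • 0) := by rw [hhom 2 two_pos, Real.rpow_one]
      _ = 0 + Φ 0 := by rw [h20, zero_add]
  exact add_right_cancel h

lemma IsSLEquivariant.map_comm_of_det_pos (hn : 0 < n) (hSL : IsSLEquivariant Φ)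
    (hhom : IsHomogeneousOfDegree Φ 1) {φ : Euc n →ₗ[ℝ] Euc n} (hφ : 0 < LinearMap.det φ)
    (K : ConvexBody (Euc n)) : Φ (mapBody φ K) = mapBody φ (Φ K) := by
  obtain ⟨c, ψ, hc, hψ, rfl⟩ : ∃ (c : ℝ) (ψ : Euc n →ₗ[ℝ] Euc n),
      0 < c ∧ LinearMap.det ψ = 1 ∧ φ = c • ψ := by
    set c : ℝ := LinearMap.det φ ^ (n : ℝ)⁻¹
    have hc : 0 < c := Real.rpow_pos_of_pos hφ _
    have hcn : c ^ n = LinearMap.det φ := by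
      rw [← Real.rpow_natCast, ← Real.rpow_mul hφ.le,
        inv_mul_cancel₀ (Nat.cast_ne_zero.mpr hn.ne'), Real.rpow_one]
    refine ⟨c, c⁻¹ • φ, hc, ?_, by rw [smul_smul, mul_inv_cancel₀ hc.ne', one_smul]⟩
    rw [LinearMap.det_smul, finrank_euclideanSpace_fin, inv_pow, hcn, inv_mul_cancel₀ hφ.ne']
  rw [mapBody_smul, mapBody_smul, hhom c hc, Real.rpow_one]
  exact congrArg (c • ·) (hSL (LinearMap.equivOfDetNeZero ψ (by simp [hψ])) hψ K)

/-- The rank-one map `P` is the limit of `P + t • id`, whose determinant is positive for `t > 0`. -/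
lemma IsSLEquivariant.map_rankOne_comm (hn : 0 < n) (hcont : Continuous Φ)
    (hSL : IsSLEquivariant Φ) (hhom : IsHomogeneousOfDegree Φ 1) {u z : Euc n}
    (huz : 0 ≤ ⟪u, z⟫) (K : ConvexBody (Euc n)) :
    Φ (mapBody ((innerₗ (Euc n) u).smulRight z) K)
      = mapBody ((innerₗ (Euc n) u).smulRight z) (Φ K) := by
  set P := (innerₗ (Euc n) u).smulRight z
  have hlim (L : ConvexBody (Euc n)) :
      Tendsto (fun t : ℝ => mapBody (P + t • LinearMap.id) L) (𝓝[>] 0) (𝓝 (mapBody P L)) :=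
    tendsto_nhdsWithin_of_tendsto_nhds (tendsto_mapBody_add_smul_id P L)
  have hcomm : ∀ᶠ t in 𝓝[>] (0 : ℝ),
      Φ (mapBody (P + t • LinearMap.id) K) = mapBody (P + t • LinearMap.id) (Φ K) :=
    eventually_mem_nhdsWithin.mono fun t ht =>
      hSL.map_comm_of_det_pos hn hhom (det_rankOne_add_smul_id_pos huz ht) K
  exact tendsto_nhds_unique (((hcont.tendsto _).comp (hlim K)).congr' hcomm) (hlim (Φ K))

lemma eq_smul_of_eq (hhom₁ : IsHomogeneousOfDegree Φ₁ 1) (hhom₂ : IsHomogeneousOfDegree Φ₂ 1)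
    {K : ConvexBody (Euc n)} (hK : Φ₁ K = Φ₂ K) {c : ℝ} (hc : 0 < c) :
    Φ₁ (c • K) = Φ₂ (c • K) := by
  rw [hhom₁ c hc, hhom₂ c hc, hK]

lemma eq_mapBody_of_eq (hSL₁ : IsSLEquivariant Φ₁) (hSL₂ : IsSLEquivariant Φ₂)
    {φ : Euc n ≃ₗ[ℝ] Euc n} (hφ : LinearMap.det (φ : Euc n →ₗ[ℝ] Euc n) = 1)
    {K : ConvexBody (Euc n)} (hK : Φ₁ K = Φ₂ K) :
    Φ₁ (mapBody (φ : Euc n →ₗ[ℝ] Euc n) K) = Φ₂ (mapBody (φ : Euc n →ₗ[ℝ] Euc n) K) := by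
  rw [hSL₁ φ hφ, hSL₂ φ hφ, hK]

lemma IsMinkowskiValuation.eq_iff_eq (hval₁ : IsMinkowskiValuation Φ₁)
    (hval₂ : IsMinkowskiValuation Φ₂) {K L M N : ConvexBody (Euc n)}
    (hM : (M : Set (Euc n)) = (K : Set (Euc n)) ∪ L)
    (hN : (N : Set (Euc n)) = (K : Set (Euc n)) ∩ L)
    (hK : Φ₁ K = Φ₂ K) (hNeq : Φ₁ N = Φ₂ N) : Φ₁ L = Φ₂ L ↔ Φ₁ M = Φ₂ M := by
  have h₁ := hval₁ K L M N hM hN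
  rw [hK, hNeq] at h₁
  rw [← add_right_inj (Φ₂ K) (b := Φ₁ L), h₁, hval₂ K L M N hM hN, add_left_inj]

lemma eq_on_lineSeg_zero_of_eq_on_point_and_segment (hn : 2 ≤ n)
    (hSL₁ : IsSLEquivariant Φ₁) (hhom₁ : IsHomogeneousOfDegree Φ₁ 1)
    (hSL₂ : IsSLEquivariant Φ₂) (hhom₂ : IsHomogeneousOfDegree Φ₂ 1) {x : Euc n} (hx : x ≠ 0)
    (hpt : Φ₁ (ptBody x) = Φ₂ (ptBody x)) (hseg : Φ₁ (segBody x) = Φ₂ (segBody x)) (t : ℝ) :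
    Φ₁ (lineSeg x t t) = Φ₂ (lineSeg x t t) ∧ Φ₁ (lineSeg x 0 t) = Φ₂ (lineSeg x 0 t) := by
  obtain ⟨ν, hν, hνx⟩ :=
    exists_det_eq_one_apply_eq_neg (by rwa [finrank_euclideanSpace_fin]) hx
  have hreflect {a b : ℝ} (h : Φ₁ (lineSeg x a b) = Φ₂ (lineSeg x a b)) :
      Φ₁ (lineSeg x (-a) (-b)) = Φ₂ (lineSeg x (-a) (-b)) := by
    have := eq_mapBody_of_eq hSL₁ hSL₂ hν h
    rwa [mapBody_lineSeg, LinearEquiv.coe_coe, hνx, lineSeg_neg] at this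
  have hscale {a b c : ℝ} (hc : 0 < c) (h : Φ₁ (lineSeg x a b) = Φ₂ (lineSeg x a b)) :
      Φ₁ (lineSeg x (c * a) (c * b)) = Φ₂ (lineSeg x (c * a) (c * b)) := by
    rw [← smul_lineSeg]
    exact eq_smul_of_eq hhom₁ hhom₂ h hc
  have hzero : Φ₁ (lineSeg x 0 0) = Φ₂ (lineSeg x 0 0) := by
    rw [lineSeg_zero_zero, hhom₁.map_zero, hhom₂.map_zero]
  have hone : Φ₁ (lineSeg x 1 1) = Φ₂ (lineSeg x 1 1) := by rwa [lineSeg_self, one_smul]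
  have hunit : Φ₁ (lineSeg x 0 1) = Φ₂ (lineSeg x 0 1) := by rwa [lineSeg_zero_one]
  rcases lt_trichotomy t 0 with ht | rfl | ht
  · constructor
    · simpa using hreflect (hscale (neg_pos.mpr ht) hone)
    · simpa using hreflect (hscale (neg_pos.mpr ht) hunit)
  · exact ⟨hzero, hzero⟩
  · exact ⟨by simpa using hscale ht hone, by simpa using hscale ht hunit⟩

lemma eq_on_lineSeg_of_eq_on_lineSeg_zero (hval₁ : IsMinkowskiValuation Φ₁)
    (hval₂ : IsMinkowskiValuation Φ₂) {x : Euc n} (hx : x ≠ 0)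
    (hbase : ∀ t, Φ₁ (lineSeg x t t) = Φ₂ (lineSeg x t t) ∧
      Φ₁ (lineSeg x 0 t) = Φ₂ (lineSeg x 0 t)) (a b : ℝ) :
    Φ₁ (lineSeg x a b) = Φ₂ (lineSeg x a b) := by
  have hbase' (t : ℝ) : Φ₁ (lineSeg x t 0) = Φ₂ (lineSeg x t 0) := by
    rw [lineSeg_comm]; exact (hbase t).2
  wlog hab : a ≤ b generalizing a b
  · rw [lineSeg_comm]; exact this b a (le_of_not_ge hab)
  rcases le_total 0 a with h0a | ha0
  · exact (hval₁.eq_iff_eq hval₂ (coe_lineSeg_eq_union h0a hab) (coe_lineSeg_eq_inter hx h0a hab)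
      (hbase a).2 (hbase a).1).mpr (hbase b).2
  rcases le_total 0 b with h0b | hb0
  · exact (hval₁.eq_iff_eq hval₂ (coe_lineSeg_eq_union ha0 h0b) (coe_lineSeg_eq_inter hx ha0 h0b)
      (hbase' a) (hbase 0).1).mp (hbase b).2
  · exact (hval₁.eq_iff_eq hval₂ ((coe_lineSeg_eq_union hab hb0).trans (Set.union_comm _ _))
      ((coe_lineSeg_eq_inter hx hab hb0).trans (Set.inter_comm _ _))
      (hbase' b) (hbase b).1).mpr (hbase' a)

theorem coe_subset_of_eq_on_lineSeg (hn : 0 < n)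
    (hcont₁ : Continuous Φ₁) (hSL₁ : IsSLEquivariant Φ₁) (hhom₁ : IsHomogeneousOfDegree Φ₁ 1)
    (hcont₂ : Continuous Φ₂) (hSL₂ : IsSLEquivariant Φ₂) (hhom₂ : IsHomogeneousOfDegree Φ₂ 1)
    {x : Euc n} (hx : x ≠ 0) (hline : ∀ a b, Φ₁ (lineSeg x a b) = Φ₂ (lineSeg x a b))
    (K : ConvexBody (Euc n)) : (Φ₁ K : Set (Euc n)) ⊆ Φ₂ K := by
  intro y hy
  by_contra hy₂
  obtain ⟨f, s, hf, hfy⟩ := geometric_hahn_banach_closed_point (Φ₂ K).convex (Φ₂ K).isClosed hy₂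
  set u := (InnerProductSpace.toDual ℝ (Euc n)).symm f
  have hu (v : Euc n) : ⟪u, v⟫ = f v := InnerProductSpace.toDual_symm_apply
  obtain ⟨c, hc, huc⟩ : ∃ c : ℝ, c ≠ 0 ∧ 0 ≤ ⟪u, c • x⟫ := by
    rcases le_total 0 ⟪u, x⟫ with h | h
    · exact ⟨1, one_ne_zero, by rwa [one_smul]⟩
    · exact ⟨-1, by norm_num, by rw [neg_one_smul, inner_neg_right]; linarith⟩
  set P := (innerₗ (Euc n) u).smulRight (c • x)
  obtain ⟨a, b, hPK⟩ := exists_mapBody_rankOne_eq_lineSeg u x c K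
  have hP : mapBody P (Φ₁ K) = mapBody P (Φ₂ K) := by
    rw [← hSL₁.map_rankOne_comm hn hcont₁ hhom₁ huc, ← hSL₂.map_rankOne_comm hn hcont₂ hhom₂ huc,
      hPK, hline]
  obtain ⟨w, hw, hPw⟩ : P y ∈ mapBody P (Φ₂ K) := hP ▸ Set.mem_image_of_mem P hy
  have hwy : ⟪u, w⟫ = ⟪u, y⟫ := smul_left_injective ℝ (smul_ne_zero hc hx) hPw
  linarith [hf w hw, hu w, hu y]

end Valuation

/-- **Lemma 5**: two `1`-homogeneous `SL(n)` equivariant continuous Minkowski valuations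
agreeing on a point `{x}` and the segment `[0, x]` for some `x ≠ 0` coincide. -/
theorem Minkowski_valuations_eq_of_eq_on_point_and_segment
    (n : ℕ) (hn : 3 ≤ n) (Φ₁ Φ₂ : ConvexBody (Euc n) → ConvexBody (Euc n))
    (hcont₁ : Continuous Φ₁) (hval₁ : IsMinkowskiValuation Φ₁) (hSL₁ : IsSLEquivariant Φ₁)
    (hhom₁ : IsHomogeneousOfDegree Φ₁ 1)
    (hcont₂ : Continuous Φ₂) (hval₂ : IsMinkowskiValuation Φ₂) (hSL₂ : IsSLEquivariant Φ₂)
    (hhom₂ : IsHomogeneousOfDegree Φ₂ 1)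
    (x : Euc n) (hx : x ≠ 0)
    (hpt : Φ₁ (ptBody x) = Φ₂ (ptBody x)) (hseg : Φ₁ (segBody x) = Φ₂ (segBody x)) :
    Φ₁ = Φ₂ := by
  have hline := eq_on_lineSeg_of_eq_on_lineSeg_zero hval₁ hval₂ hx
    (eq_on_lineSeg_zero_of_eq_on_point_and_segment (by omega) hSL₁ hhom₁ hSL₂ hhom₂ hx hpt hseg)
  funext K
  exact ConvexBody.ext <| subset_antisymm
    (coe_subset_of_eq_on_lineSeg (by omega) hcont₁ hSL₁ hhom₁ hcont₂ hSL₂ hhom₂ hx hline K)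
    (coe_subset_of_eq_on_lineSeg (by omega) hcont₂ hSL₂ hhom₂ hcont₁ hSL₁ hhom₁ hx
      (fun a b => (hline a b).symm) K)
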